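/- Suppose P is a simple Jordan pair over 𝕂 equipped with a non-trivial SP-grading (i.e. P₀ ≠ 0 and P₁ ≠ 0). Then the reflection P̌ of P is not a Jordan pair. -/

import Mathlib

/-- A Kantor pair over `K`: a pair of modules `(Pm, Pp)` (for `P⁻`, `P⁺`) with trilinear
products `tm : P⁻ × P⁺ × P⁻ → P⁻` and `tp : P⁺ × P⁻ × P⁺ → P⁺` satisfying the Kantor
identities (K1) and (K2). -/
structure KantorPair (K : Type*) [CommRing K] (Pm Pp : Type*)
    [AddCommGroup Pm] [AddCommGroup Pp] [Module K Pm] [Module K Pp] where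
  tm : Pm → Pp → Pm → Pm
  tp : Pp → Pm → Pp → Pp
  tm_add₁ : ∀ x x' y z, tm (x + x') y z = tm x y z + tm x' y z
  tm_smul₁ : ∀ (a : K) x y z, tm (a • x) y z = a • tm x y z
  tm_add₂ : ∀ x y y' z, tm x (y + y') z = tm x y z + tm x y' z
  tm_smul₂ : ∀ (a : K) x y z, tm x (a • y) z = a • tm x y z
  tm_add₃ : ∀ x y z z', tm x y (z + z') = tm x y z + tm x y z'
  tm_smul₃ : ∀ (a : K) x y z, tm x y (a • z) = a • tm x y z
  tp_add₁ : ∀ x x' y z, tp (x + x') y z = tp x y z + tp x' y z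
  tp_smul₁ : ∀ (a : K) x y z, tp (a • x) y z = a • tp x y z
  tp_add₂ : ∀ x y y' z, tp x (y + y') z = tp x y z + tp x y' z
  tp_smul₂ : ∀ (a : K) x y z, tp x (a • y) z = a • tp x y z
  tp_add₃ : ∀ x y z z', tp x y (z + z') = tp x y z + tp x y z'
  tp_smul₃ : ∀ (a : K) x y z, tp x y (a • z) = a • tp x y z
  k1m : ∀ (x z u : Pm) (y w : Pp),
    tm x y (tm z w u) - tm z w (tm x y u) = tm (tm x y z) w u - tm z (tp y x w) u
  k1p : ∀ (x z u : Pp) (y w : Pm),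
    tp x y (tp z w u) - tp z w (tp x y u) = tp (tp x y z) w u - tp z (tm y x w) u
  k2m : ∀ (x z u : Pm) (w v : Pp),
    (tm x (tp w u v) z - tm z (tp w u v) x) + tm u w (tm x v z - tm z v x)
      = tm (tm x w z - tm z w x) v u - tm u v (tm x w z - tm z w x)
  k2p : ∀ (x z u : Pp) (w v : Pm),
    (tp x (tm w u v) z - tp z (tm w u v) x) + tp u w (tp x v z - tp z v x)
      = tp (tp x w z - tp z w x) v u - tp u v (tp x w z - tp z w x)

namespace KantorPair

variable {K : Type*} [CommRing K] {Pm Pp : Type*}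
  [AddCommGroup Pm] [AddCommGroup Pp] [Module K Pm] [Module K Pp]

/-- `Q = (Qm, Qp)` is an ideal of the Kantor pair:
`{P,P,Q} + {P,Q,P} + {Q,P,P} ⊆ Q` on each side. -/
def IsIdealPair (KP : KantorPair K Pm Pp) (Qm : Submodule K Pm) (Qp : Submodule K Pp) : Prop :=
  (∀ (x z : Pm) (y : Pp) (q : Pm), q ∈ Qm → KP.tm x y q ∈ Qm ∧ KP.tm q y z ∈ Qm) ∧
  (∀ (x z : Pm) (r : Pp), r ∈ Qp → KP.tm x r z ∈ Qm) ∧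
  (∀ (x z : Pp) (y : Pm) (q : Pp), q ∈ Qp → KP.tp x y q ∈ Qp ∧ KP.tp q y z ∈ Qp) ∧
  (∀ (x z : Pp) (r : Pm), r ∈ Qm → KP.tp x r z ∈ Qp)

/-- A Kantor pair is simple if some product is nonzero and its only ideals are `0` and `P`. -/
def IsSimplePair (KP : KantorPair K Pm Pp) : Prop :=
  ((∃ x y z, KP.tm x y z ≠ 0) ∨ (∃ x y z, KP.tp x y z ≠ 0)) ∧
  ∀ Qm Qp, KP.IsIdealPair Qm Qp → (Qm = ⊥ ∧ Qp = ⊥) ∨ (Qm = ⊤ ∧ Qp = ⊤)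

/-- `(ωm, ωp)` belongs to the centroid of the Kantor pair. -/
def InCentroid (KP : KantorPair K Pm Pp) (ωm : Pm →ₗ[K] Pm) (ωp : Pp →ₗ[K] Pp) : Prop :=
  (∀ x y z, ωm (KP.tm x y z) = KP.tm (ωm x) y z ∧
      ωm (KP.tm x y z) = KP.tm x (ωp y) z ∧ ωm (KP.tm x y z) = KP.tm x y (ωm z)) ∧
  (∀ x y z, ωp (KP.tp x y z) = KP.tp (ωp x) y z ∧
      ωp (KP.tp x y z) = KP.tp x (ωm y) z ∧ ωp (KP.tp x y z) = KP.tp x y (ωp z))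

/-- The Kantor pair is central: `a ↦ (a • id, a • id)` is an isomorphism of `K`
onto the centroid. -/
def IsCentralPair (KP : KantorPair K Pm Pp) : Prop :=
  (∀ ωm ωp, KP.InCentroid ωm ωp →
    ∃ a : K, ωm = a • (LinearMap.id : Pm →ₗ[K] Pm) ∧ ωp = a • (LinearMap.id : Pp →ₗ[K] Pp)) ∧
  ∀ a : K, a • (LinearMap.id : Pm →ₗ[K] Pm) = 0 →
    a • (LinearMap.id : Pp →ₗ[K] Pp) = 0 → a = 0

/-- A Jordan pair is a Kantor pair with vanishing K-operators, i.e. symmetric products. -/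
def IsJordanPair (KP : KantorPair K Pm Pp) : Prop :=
  (∀ (x z : Pm) (y : Pp), KP.tm x y z = KP.tm z y x) ∧
  (∀ (x z : Pp) (y : Pm), KP.tp x y z = KP.tp z y x)

end KantorPair

/-- A 5-grading (= BC₁-grading) of a Lie algebra `L` over `K`:
an internal direct sum decomposition `L = ⊕_{i ∈ ℤ} L_i` with `⁅L_i, L_j⁆ ⊆ L_{i+j}`
and `L_i = 0` for `|i| > 2`. -/
structure FiveGrading (K : Type*) [CommRing K] (L : Type*) [LieRing L] [LieAlgebra K L] where
  g : ℤ → Submodule K L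
  internal : DirectSum.IsInternal g
  lie_mem : ∀ (i j : ℤ) (x y : L), x ∈ g i → y ∈ g j → ⁅x, y⁆ ∈ g (i + j)
  vanish : ∀ i : ℤ, 2 < |i| → g i = ⊥

/-- `T_L(P) = L_{-1} ⊕ L_1` as a submodule of `L`. -/
def Tsub {K : Type*} [CommRing K] {L : Type*} [LieRing L] [LieAlgebra K L]
    (fg : FiveGrading K L) : Submodule K L :=
  fg.g (-1) ⊔ fg.g 1

/-- The span of all brackets `⁅x, y⁆` with `x ∈ U`, `y ∈ V`. -/
def brkSpan (K : Type*) [CommRing K] {L : Type*} [LieRing L] [LieAlgebra K L]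
    (U V : Submodule K L) : Submodule K L :=
  Submodule.span K {w : L | ∃ x ∈ U, ∃ y ∈ V, w = ⁅x, y⁆}

/-- A 5-graded Lie algebra `L` tightly envelops the Kantor pair `(L_{-1}, L_1)` if it
is generated as a Lie algebra by `T = L_{-1} ⊕ L_1` and `Z(L) ∩ [T, T] = 0`. -/
def Tight (K : Type*) [CommRing K] {L : Type*} [LieRing L] [LieAlgebra K L]
    (fg : FiveGrading K L) : Prop :=
  LieSubalgebra.lieSpan K L ↑(Tsub fg) = ⊤ ∧
  ∀ z ∈ brkSpan K (Tsub fg) (Tsub fg), (∀ u : L, ⁅z, u⁆ = 0) → z = 0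

/-- A 5-graded Lie algebra `(L, fg)` envelops a Kantor pair `KP`: there are identifications
of `P⁻` with `L_{-1}` and `P⁺` with `L_1` under which the products of `KP` are the products
`⁅⁅x, y⁆, z⁆` of `L`. -/
structure Envelops {K : Type*} [CommRing K] {Pm Pp : Type*}
    [AddCommGroup Pm] [AddCommGroup Pp] [Module K Pm] [Module K Pp]
    (KP : KantorPair K Pm Pp)
    {L : Type*} [LieRing L] [LieAlgebra K L] (fg : FiveGrading K L) where
  em : Pm →ₗ[K] L
  ep : Pp →ₗ[K] L
  inj_m : Function.Injective em
  inj_p : Function.Injective ep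
  range_m : LinearMap.range em = fg.g (-1)
  range_p : LinearMap.range ep = fg.g 1
  compat_m : ∀ (x z : Pm) (y : Pp), em (KP.tm x y z) = ⁅⁅em x, ep y⁆, em z⁆
  compat_p : ∀ (x z : Pp) (y : Pm), ep (KP.tp x y z) = ⁅⁅ep x, em y⁆, ep z⁆

/-- A short Peirce grading (SP-grading) of a Kantor pair: a `ℤ`-grading with support
contained in `{0, 1}`. -/
structure SPGrading {K : Type*} [CommRing K] {Pm Pp : Type*}
    [AddCommGroup Pm] [AddCommGroup Pp] [Module K Pm] [Module K Pp]
    (KP : KantorPair K Pm Pp) where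
  Qm : ℤ → Submodule K Pm
  Qp : ℤ → Submodule K Pp
  sup_m : Qm 0 ⊔ Qm 1 = ⊤
  disj_m : Disjoint (Qm 0) (Qm 1)
  sup_p : Qp 0 ⊔ Qp 1 = ⊤
  disj_p : Disjoint (Qp 0) (Qp 1)
  vanish_m : ∀ i : ℤ, i ≠ 0 → i ≠ 1 → Qm i = ⊥
  vanish_p : ∀ i : ℤ, i ≠ 0 → i ≠ 1 → Qp i = ⊥
  grade_m : ∀ (i j k : ℤ) (x : Pm) (y : Pp) (z : Pm),
    x ∈ Qm i → y ∈ Qp j → z ∈ Qm k → KP.tm x y z ∈ Qm (i - j + k)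
  grade_p : ∀ (i j k : ℤ) (x : Pp) (y : Pm) (z : Pp),
    x ∈ Qp i → y ∈ Qm j → z ∈ Qp k → KP.tp x y z ∈ Qp (i - j + k)

/-- `KPc` is the reflection `P̌` of the SP-graded Kantor pair `(KP, SP)`:
`P̌^σ = P₀^{-σ} ⊕ P₁^σ`, with products given by the reflection formula. -/
def IsReflection {K : Type*} [CommRing K] {Pm Pp : Type*}
    [AddCommGroup Pm] [AddCommGroup Pp] [Module K Pm] [Module K Pp]
    (KP : KantorPair K Pm Pp) (SP : SPGrading KP)
    (KPc : KantorPair K ((SP.Qp 0) × (SP.Qm 1)) ((SP.Qm 0) × (SP.Qp 1))) : Prop :=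
  (∀ (a c : (SP.Qm 0) × (SP.Qp 1)) (b : (SP.Qp 0) × (SP.Qm 1)),
    ((KPc.tp a b c).1 : Pm)
      = KP.tm a.1 b.1 c.1 - KP.tm b.2 a.2 c.1 + (KP.tm a.1 c.2 b.2 - KP.tm b.2 c.2 a.1) ∧
    ((KPc.tp a b c).2 : Pp)
      = KP.tp a.2 b.2 c.2 - KP.tp b.1 a.1 c.2 + (KP.tp a.2 c.1 b.1 - KP.tp b.1 c.1 a.2)) ∧
  (∀ (a c : (SP.Qp 0) × (SP.Qm 1)) (b : (SP.Qm 0) × (SP.Qp 1)),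
    ((KPc.tm a b c).1 : Pp)
      = KP.tp a.1 b.1 c.1 - KP.tp b.2 a.2 c.1 + (KP.tp a.1 c.2 b.2 - KP.tp b.2 c.2 a.1) ∧
    ((KPc.tm a b c).2 : Pm)
      = KP.tm a.2 b.2 c.2 - KP.tm b.1 a.1 c.2 + (KP.tm a.2 c.1 b.1 - KP.tm b.1 c.1 a.2))

/-!
If the reflection `P̌` is a Jordan pair, comparing `{a, b, c}ˇ` with `{c, b, a}ˇ` for homogeneous
arguments shows that the products `{P₀, P₁, P₁}` and `{P₁, P₀, P₀}` of `P` vanish. These are the only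
products with a factor in `P₁` that the grading allows to land in `P₀`, so, the products of `P` being
symmetric, `P₁` is an ideal of `P`. Simplicity then forces `P₁ = 0` or `P₁ = P`, i.e. a trivial
grading.
-/

namespace KantorPair

variable {K : Type*} [CommRing K] {Pm Pp : Type*}
  [AddCommGroup Pm] [AddCommGroup Pp] [Module K Pm] [Module K Pp]

/-- `P` with `P⁻` and `P⁺` exchanged, so that facts about `tm` yield the facts about `tp`. -/
def swap (KP : KantorPair K Pm Pp) : KantorPair K Pp Pm where
  tm := KP.tp
  tp := KP.tm
  tm_add₁ := KP.tp_add₁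
  tm_smul₁ := KP.tp_smul₁
  tm_add₂ := KP.tp_add₂
  tm_smul₂ := KP.tp_smul₂
  tm_add₃ := KP.tp_add₃
  tm_smul₃ := KP.tp_smul₃
  tp_add₁ := KP.tm_add₁
  tp_smul₁ := KP.tm_smul₁
  tp_add₂ := KP.tm_add₂
  tp_smul₂ := KP.tm_smul₂
  tp_add₃ := KP.tm_add₃
  tp_smul₃ := KP.tm_smul₃
  k1m := KP.k1p
  k1p := KP.k1m
  k2m := KP.k2p
  k2p := KP.k2m

variable (KP : KantorPair K Pm Pp)

theorem tm_zero_left (y : Pp) (z : Pm) : KP.tm 0 y z = 0 := by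
  simpa using KP.tm_smul₁ 0 0 y z

theorem tm_zero_middle (x z : Pm) : KP.tm x 0 z = 0 := by
  simpa using KP.tm_smul₂ 0 x 0 z

theorem tm_zero_right (x : Pm) (y : Pp) : KP.tm x y 0 = 0 := by
  simpa using KP.tm_smul₃ 0 x y 0

theorem tp_zero_left (y : Pm) (z : Pp) : KP.tp 0 y z = 0 := KP.swap.tm_zero_left y z

theorem tp_zero_middle (x z : Pp) : KP.tp x 0 z = 0 := KP.swap.tm_zero_middle x z

theorem tp_zero_right (x : Pp) (y : Pm) : KP.tp x y 0 = 0 := KP.swap.tm_zero_right x y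

variable {KP}

theorem IsJordanPair.swap (hJ : KP.IsJordanPair) : KP.swap.IsJordanPair := ⟨hJ.2, hJ.1⟩

theorem isIdealPair_of_absorbing {Qm : Submodule K Pm} {Qp : Submodule K Pp}
    (hm : ∀ {x y z}, x ∈ Qm ∨ y ∈ Qp ∨ z ∈ Qm → KP.tm x y z ∈ Qm)
    (hp : ∀ {x y z}, x ∈ Qp ∨ y ∈ Qm ∨ z ∈ Qp → KP.tp x y z ∈ Qp) :
    KP.IsIdealPair Qm Qp :=
  ⟨fun _ _ _ _ hq => ⟨hm (.inr (.inr hq)), hm (.inl hq)⟩, fun _ _ _ hr => hm (.inr (.inl hr)),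
    fun _ _ _ _ hq => ⟨hp (.inr (.inr hq)), hp (.inl hq)⟩, fun _ _ _ hr => hp (.inr (.inl hr))⟩

end KantorPair

namespace SPGrading

variable {K : Type*} [CommRing K] {Pm Pp : Type*}
  [AddCommGroup Pm] [AddCommGroup Pp] [Module K Pm] [Module K Pp]
  {KP : KantorPair K Pm Pp} (SP : SPGrading KP)

def swap : SPGrading KP.swap where
  Qm := SP.Qp
  Qp := SP.Qm
  sup_m := SP.sup_p
  disj_m := SP.disj_p
  sup_p := SP.sup_m
  disj_p := SP.disj_m
  vanish_m := SP.vanish_p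
  vanish_p := SP.vanish_m
  grade_m := SP.grade_p
  grade_p := SP.grade_m

theorem exists_add_eq_m (x : Pm) : ∃ x₀ ∈ SP.Qm 0, ∃ x₁ ∈ SP.Qm 1, x₀ + x₁ = x :=
  Submodule.mem_sup.mp (SP.sup_m ▸ Submodule.mem_top)

theorem exists_add_eq_p (y : Pp) : ∃ y₀ ∈ SP.Qp 0, ∃ y₁ ∈ SP.Qp 1, y₀ + y₁ = y :=
  SP.swap.exists_add_eq_m y

theorem tm_eq_zero_of_degree {i j k : ℤ} (h0 : i - j + k ≠ 0) (h1 : i - j + k ≠ 1)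
    {x : Pm} {y : Pp} {z : Pm} (hx : x ∈ SP.Qm i) (hy : y ∈ SP.Qp j) (hz : z ∈ SP.Qm k) :
    KP.tm x y z = 0 := by
  simpa [SP.vanish_m _ h0 h1] using SP.grade_m i j k x y z hx hy hz

theorem tm_mem_one_of_mem_one {x : Pm} {y : Pp} {z : Pm}
    (hx : x ∈ SP.Qm 1) (hy : y ∈ SP.Qp 1) (hz : z ∈ SP.Qm 1) : KP.tm x y z ∈ SP.Qm 1 := by
  simpa using SP.grade_m 1 1 1 x y z hx hy hz

theorem tm_mem_one (hJ : KP.IsJordanPair)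
    (h011 : ∀ a ∈ SP.Qm 0, ∀ b ∈ SP.Qp 1, ∀ c ∈ SP.Qm 1, KP.tm a b c = 0)
    (h100 : ∀ a ∈ SP.Qm 1, ∀ b ∈ SP.Qp 0, ∀ c ∈ SP.Qm 0, KP.tm a b c = 0)
    {x : Pm} {y : Pp} {z : Pm} (h : x ∈ SP.Qm 1 ∨ y ∈ SP.Qp 1 ∨ z ∈ SP.Qm 1) :
    KP.tm x y z ∈ SP.Qm 1 := by
  have left : ∀ {x : Pm} (y : Pp) (z : Pm), x ∈ SP.Qm 1 → KP.tm x y z ∈ SP.Qm 1 := by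
    intro x y z hx
    obtain ⟨y₀, hy₀, y₁, hy₁, rfl⟩ := SP.exists_add_eq_p y
    obtain ⟨z₀, hz₀, z₁, hz₁, rfl⟩ := SP.exists_add_eq_m z
    simp only [KP.tm_add₂, KP.tm_add₃, h100 x hx y₀ hy₀ z₀ hz₀,
      SP.tm_eq_zero_of_degree (by norm_num) (by norm_num) hx hy₀ hz₁,
      hJ.1 x z₀ y₁, h011 z₀ hz₀ y₁ hy₁ x hx, zero_add]
    exact SP.tm_mem_one_of_mem_one hx hy₁ hz₁
  rcases h with hx | hy | hz
  · exact left y z hx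
  · obtain ⟨x₀, hx₀, x₁, hx₁, rfl⟩ := SP.exists_add_eq_m x
    obtain ⟨z₀, hz₀, z₁, hz₁, rfl⟩ := SP.exists_add_eq_m z
    simp only [KP.tm_add₁, KP.tm_add₃,
      SP.tm_eq_zero_of_degree (by norm_num) (by norm_num) hx₀ hy hz₀, h011 x₀ hx₀ y hy z₁ hz₁,
      zero_add]
    exact add_mem (left y z₀ hx₁) (left y z₁ hx₁)
  · exact hJ.1 x z y ▸ left y x hz

end SPGrading

namespace IsReflection

open KantorPair

variable {K : Type*} [CommRing K] {Pm Pp : Type*}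
  [AddCommGroup Pm] [AddCommGroup Pp] [Module K Pm] [Module K Pp]
  {KP : KantorPair K Pm Pp} {SP : SPGrading KP}
  {KPc : KantorPair K ((SP.Qp 0) × (SP.Qm 1)) ((SP.Qm 0) × (SP.Qp 1))}

theorem swap (hrefl : IsReflection KP SP KPc) : IsReflection KP.swap SP.swap KPc.swap :=
  ⟨hrefl.2, hrefl.1⟩

theorem tm_eq_zero (hrefl : IsReflection KP SP KPc) (hJc : KPc.IsJordanPair)
    {a : Pm} {b : Pp} {c : Pm} (ha : a ∈ SP.Qm 0) (hb : b ∈ SP.Qp 1) (hc : c ∈ SP.Qm 1) :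
    KP.tm a b c = 0 := by
  have h := congrArg (fun p => (p.1 : Pm)) (hJc.2 (⟨a, ha⟩, 0) (0, ⟨b, hb⟩) (0, ⟨c, hc⟩))
  simpa [(hrefl.1 _ _ _).1, tm_zero_left, tm_zero_middle, tm_zero_right] using h

theorem tp_eq_zero (hrefl : IsReflection KP SP KPc) (hJc : KPc.IsJordanPair)
    {a : Pp} {b : Pm} {c : Pp} (ha : a ∈ SP.Qp 1) (hb : b ∈ SP.Qm 0) (hc : c ∈ SP.Qp 0) :
    KP.tp a b c = 0 := by
  have h := congrArg (fun p => (p.2 : Pp)) (hJc.2 (0, ⟨a, ha⟩) (⟨b, hb⟩, 0) (⟨c, hc⟩, 0))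
  simpa [(hrefl.1 _ _ _).2, tp_zero_left, tp_zero_middle, tp_zero_right] using h

theorem tm_mem_one (hrefl : IsReflection KP SP KPc) (hJ : KP.IsJordanPair)
    (hJc : KPc.IsJordanPair) {x : Pm} {y : Pp} {z : Pm}
    (h : x ∈ SP.Qm 1 ∨ y ∈ SP.Qp 1 ∨ z ∈ SP.Qm 1) : KP.tm x y z ∈ SP.Qm 1 :=
  SP.tm_mem_one hJ (fun _ ha _ hb _ hc => hrefl.tm_eq_zero hJc ha hb hc)
    (fun _ ha _ hb _ hc => hrefl.swap.tp_eq_zero hJc.swap ha hb hc) h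

end IsReflection

theorem statement14_general {K : Type*} [CommRing K]
    {Pm Pp : Type*} [AddCommGroup Pm] [AddCommGroup Pp] [Module K Pm] [Module K Pp]
    (KP : KantorPair K Pm Pp) (SP : SPGrading KP)
    (hJordan : KP.IsJordanPair) (hsimple : KP.IsSimplePair)
    (h0 : SP.Qm 0 ≠ ⊥ ∨ SP.Qp 0 ≠ ⊥) (h1 : SP.Qm 1 ≠ ⊥ ∨ SP.Qp 1 ≠ ⊥)
    (KPc : KantorPair K ((SP.Qp 0) × (SP.Qm 1)) ((SP.Qm 0) × (SP.Qp 1)))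
    (hrefl : IsReflection KP SP KPc) :
    ¬ KPc.IsJordanPair := by
  intro hJc
  have hideal : KP.IsIdealPair (SP.Qm 1) (SP.Qp 1) :=
    KP.isIdealPair_of_absorbing (hrefl.tm_mem_one hJordan hJc)
      (hrefl.swap.tm_mem_one hJordan.swap hJc.swap)
  rcases hsimple.2 _ _ hideal with ⟨hm, hp⟩ | ⟨hm, hp⟩
  · exact h1.elim (· hm) (· hp)
  · exact h0.elim (· (disjoint_top.mp (hm ▸ SP.disj_m))) (· (disjoint_top.mp (hp ▸ SP.disj_p)))

/-- If `P` is a simple Jordan pair equipped with a non-trivial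
SP-grading (`P₀ ≠ 0` and `P₁ ≠ 0`), then its reflection `P̌` is not a Jordan pair. -/
theorem statement14 {K : Type*} [CommRing K] (h6 : IsUnit (6 : K))
    {Pm Pp : Type*} [AddCommGroup Pm] [AddCommGroup Pp] [Module K Pm] [Module K Pp]
    (KP : KantorPair K Pm Pp) (SP : SPGrading KP)
    (hJordan : KP.IsJordanPair) (hsimple : KP.IsSimplePair)
    (h0 : SP.Qm 0 ≠ ⊥ ∨ SP.Qp 0 ≠ ⊥) (h1 : SP.Qm 1 ≠ ⊥ ∨ SP.Qp 1 ≠ ⊥)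
    (KPc : KantorPair K ((SP.Qp 0) × (SP.Qm 1)) ((SP.Qm 0) × (SP.Qp 1)))
    (hrefl : IsReflection KP SP KPc) :
    ¬ KPc.IsJordanPair :=
  statement14_general KP SP hJordan hsimple h0 h1 KPc hrefl
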